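/- arXiv:1407.2904 — 4 statements merged into one kernel-verified Lean document; each statement's English description precedes it below -/
import Mathlib

section
/- With π_j = λ_j(K)/tr(K), π_c,j = λ_j(K_c)/tr(K_c), and γ = tr(K_c)/tr(K), the proportions of total variation satisfy π_{j+1} ≤ γ·π_c,j ≤ π_j for every j. -/
open Matrix BigOperators

namespace InterlaceAux
variable {n : ℕ}

noncomputable def col (A : Matrix (Fin n) (Fin n) ℝ) (i : Fin n) : Fin n → ℝ := fun k => A k i

lemma col_ortho {A : Matrix (Fin n) (Fin n) ℝ} (hA : Aᵀ * A = 1) (i k : Fin n) :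
    col A i ⬝ᵥ col A k = if i = k then 1 else 0 := by
  have h := congrFun (congrFun hA i) k
  simpa [Matrix.mul_apply, Matrix.one_apply, col, dotProduct] using h

lemma expand_quad {A : Matrix (Fin n) (Fin n) ℝ} (lam : Fin n → ℝ)
    (v : Fin n → ℝ) :
    v ⬝ᵥ (A * diagonal lam * Aᵀ) *ᵥ v = ∑ i, lam i * (col A i ⬝ᵥ v) ^ 2 := by
  rw [← Matrix.mulVec_mulVec, ← Matrix.mulVec_mulVec, Matrix.dotProduct_mulVec (w := _),
    ← Matrix.mulVec_transpose]
  have : ∀ i, (Aᵀ *ᵥ v) i = col A i ⬝ᵥ v := by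
    intro i; simp [Matrix.mulVec, col, dotProduct, Matrix.transpose_apply]
  simp only [dotProduct, Matrix.mulVec_diagonal, this]
  exact Finset.sum_congr rfl fun i _ => by ring

lemma expand_norm {A : Matrix (Fin n) (Fin n) ℝ} (hA : Aᵀ * A = 1)
    (v : Fin n → ℝ) :
    v ⬝ᵥ v = ∑ i, (col A i ⬝ᵥ v) ^ 2 := by
  have h1 : A * Aᵀ = 1 := mul_eq_one_comm.mp hA
  have h2 : v ⬝ᵥ (A * Aᵀ) *ᵥ v = v ⬝ᵥ v := by rw [h1, Matrix.one_mulVec]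
  rw [← h2, ← Matrix.mulVec_mulVec, Matrix.dotProduct_mulVec (w := _),
    ← Matrix.mulVec_transpose]
  have : ∀ i, (Aᵀ *ᵥ v) i = col A i ⬝ᵥ v := by
    intro i; simp [Matrix.mulVec, col, dotProduct, Matrix.transpose_apply]
  simp only [dotProduct, this]
  exact Finset.sum_congr rfl fun i _ => by ring

lemma coeff_zero {A : Matrix (Fin n) (Fin n) ℝ} (hA : Aᵀ * A = 1) {s : Set (Fin n)}
    {v : Fin n → ℝ} (hv : v ∈ Submodule.span ℝ (col A '' s)) {i : Fin n} (hi : i ∉ s) :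
    col A i ⬝ᵥ v = 0 := by
  induction hv using Submodule.span_induction with
  | mem x hx =>
    obtain ⟨k, hk, rfl⟩ := hx
    have := col_ortho hA i k
    rw [this, if_neg (by rintro rfl; exact hi hk)]
  | zero => simp
  | add x y _ _ hx hy => rw [dotProduct_add, hx, hy, add_zero]
  | smul c x _ hx => rw [dotProduct_smul, hx, smul_zero]

lemma dp_sum {ι : Type*} (w : Fin n → ℝ) (s : Finset ι) (f : ι → Fin n → ℝ) :
    w ⬝ᵥ (∑ i ∈ s, f i) = ∑ i ∈ s, w ⬝ᵥ f i := by
  simp only [dotProduct, Finset.sum_apply, Finset.mul_sum]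
  exact Finset.sum_comm

lemma finrank_span_cols {A : Matrix (Fin n) (Fin n) ℝ} (hA : Aᵀ * A = 1) (s : Finset (Fin n)) :
    Module.finrank ℝ (Submodule.span ℝ (col A '' ↑s)) = s.card := by
  have hli : LinearIndependent ℝ (fun i : s => col A i.1) := by
    rw [Fintype.linearIndependent_iff]
    intro g hg k
    have h0 : col A k.1 ⬝ᵥ (∑ i : s, g i • col A i.1) = 0 := by rw [hg]; simp
    rw [dp_sum] at h0
    simp only [dotProduct_smul, col_ortho hA, smul_eq_mul] at h0
    rw [Finset.sum_eq_single k] at h0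
    · simpa [eq_comm] using h0
    · intro b _ hb
      rw [if_neg (by intro h; apply hb; apply Subtype.ext; simp only [h]), mul_zero]
    · simp
  have := finrank_span_eq_card hli
  rw [show Set.range (fun i : s => col A i.1) = col A '' ↑s by
    ext x; simp [Set.mem_image]] at this
  rw [this, Fintype.card_coe]

lemma quad_le_of_mem_tail {A : Matrix (Fin n) (Fin n) ℝ} (hA : Aᵀ * A = 1)
    {lam : Fin n → ℝ} (hlam : Antitone lam) (j : Fin n) {v : Fin n → ℝ}
    (hv : v ∈ Submodule.span ℝ (col A '' ↑(Finset.Ici j))) :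
    v ⬝ᵥ (A * diagonal lam * Aᵀ) *ᵥ v ≤ lam j * (v ⬝ᵥ v) := by
  rw [expand_quad, expand_norm hA, Finset.mul_sum]
  apply Finset.sum_le_sum
  intro i _
  by_cases hij : j ≤ i
  · exact mul_le_mul_of_nonneg_right (hlam hij) (sq_nonneg _)
  · rw [coeff_zero hA hv (by simpa using hij)]; simp

lemma quad_ge_of_mem_head {A : Matrix (Fin n) (Fin n) ℝ} (hA : Aᵀ * A = 1)
    {lam : Fin n → ℝ} (hlam : Antitone lam) (j : Fin n) {v : Fin n → ℝ}
    (hv : v ∈ Submodule.span ℝ (col A '' ↑(Finset.Iic j))) :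
    lam j * (v ⬝ᵥ v) ≤ v ⬝ᵥ (A * diagonal lam * Aᵀ) *ᵥ v := by
  rw [expand_quad, expand_norm hA, Finset.mul_sum]
  apply Finset.sum_le_sum
  intro i _
  by_cases hij : i ≤ j
  · exact mul_le_mul_of_nonneg_right (hlam hij) (sq_nonneg _)
  · rw [coeff_zero hA hv (by simpa using hij)]; simp

lemma finrank_inf (S T : Submodule ℝ (Fin n → ℝ)) :
    Module.finrank ℝ S + Module.finrank ℝ T ≤ n + Module.finrank ℝ ↥(S ⊓ T) := by
  have hfin : Module.finrank ℝ ↥(S ⊔ T) ≤ n := by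
    have h1 := Submodule.finrank_le (S ⊔ T)
    rwa [Module.finrank_fin_fun] at h1
  have heq := Submodule.finrank_sup_add_finrank_inf_eq S T
  omega

lemma exists_nonzero_of_finrank_pos {S : Submodule ℝ (Fin n → ℝ)}
    (hpos : 0 < Module.finrank ℝ S) : ∃ v : Fin n → ℝ, v ∈ S ∧ v ≠ 0 := by
  have hbot : S ≠ ⊥ := by
    intro hb
    rw [hb, finrank_bot] at hpos
    exact lt_irrefl _ hpos
  exact Submodule.exists_mem_ne_zero_of_ne_bot hbot

lemma dot_self_pos {v : Fin n → ℝ} (hv : v ≠ 0) : 0 < v ⬝ᵥ v := by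
  have h1 : 0 ≤ v ⬝ᵥ v := Finset.sum_nonneg fun i _ => mul_self_nonneg _
  have h2 : v ⬝ᵥ v ≠ 0 := fun h => hv (dotProduct_self_eq_zero.mp h)
  exact lt_of_le_of_ne h1 (Ne.symm h2)

lemma eig_col {A K : Matrix (Fin n) (Fin n) ℝ} {lam : Fin n → ℝ} (hA : Aᵀ * A = 1)
    (hKd : K = A * diagonal lam * Aᵀ) (i : Fin n) :
    K *ᵥ col A i = lam i • col A i := by
  have hKA : K * A = A * diagonal lam := by
    rw [hKd, mul_assoc (A * diagonal lam), hA, mul_one]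
  funext k
  have h := congrFun (congrFun hKA k) i
  simp only [Matrix.mul_apply, Matrix.diagonal_apply, mul_ite, mul_zero,
    Finset.sum_ite_eq', Finset.mem_univ, if_true] at h
  simpa [Matrix.mulVec, dotProduct, col, mul_comm] using h

lemma lam_nonneg {A K : Matrix (Fin n) (Fin n) ℝ} {lam : Fin n → ℝ} (hA : Aᵀ * A = 1)
    (hKd : K = A * diagonal lam * Aᵀ) (hK : K.PosSemidef) (i : Fin n) :
    0 ≤ lam i := by
  have h1 := hK.dotProduct_mulVec_nonneg (col A i)
  rw [eig_col hA hKd i] at h1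
  have h2 : col A i ⬝ᵥ col A i = 1 := by rw [col_ortho hA i i]; simp
  simpa [dotProduct_smul, star_trivial, h2] using h1

end InterlaceAux

theorem interlacing_proportions {n : ℕ} (hn : 0 < n)
    (K P Kc : Matrix (Fin n) (Fin n) ℝ)
    (hK : K.PosSemidef)
    (hP : P = (n : ℝ)⁻¹ • vecMulVec (fun _ => 1) (fun _ => 1))
    (hKc : Kc = (1 - P) * K * (1 - P))
    (A Ac : Matrix (Fin n) (Fin n) ℝ)
    (lam lamc : Fin n → ℝ)
    (hA : Aᵀ * A = 1) (hAc : Acᵀ * Ac = 1)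
    (hKd : K = A * diagonal lam * Aᵀ)
    (hKcd : Kc = Ac * diagonal lamc * Acᵀ)
    (hlam : Antitone lam) (hlamc : Antitone lamc)
    (htr : 0 < K.trace) (htrc : 0 < Kc.trace) :
    ∀ j : Fin n,
      (∀ h : (j : ℕ) + 1 < n,
        lam ⟨(j : ℕ) + 1, h⟩ / K.trace
          ≤ (Kc.trace / K.trace) * (lamc j / Kc.trace)) ∧
      (Kc.trace / K.trace) * (lamc j / Kc.trace) ≤ lam j / K.trace := by
  classical
  open InterlaceAux in
  have hn' : (n : ℝ) ≠ 0 := Nat.cast_ne_zero.mpr hn.ne'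
  have hPsym : Pᵀ = P := by
    rw [hP]; ext i k
    simp [Matrix.transpose_apply, Matrix.vecMulVec_apply]
  have hPP : P * P = P := by
    rw [hP]; ext i k
    simp only [Matrix.mul_apply, Matrix.smul_apply, Matrix.vecMulVec_apply, smul_eq_mul,
      mul_one, one_mul, Finset.sum_const, Finset.card_univ, Fintype.card_fin, nsmul_eq_mul]
    field_simp
  have hP1 : P * (1 - P) = 0 := by rw [mul_sub, mul_one, hPP, sub_self]
  have hPKc : P * Kc = 0 := by
    rw [hKc, ← mul_assoc, ← mul_assoc, hP1, Matrix.zero_mul, Matrix.zero_mul]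
  have hQsym : (1 - P)ᵀ = 1 - P := by rw [Matrix.transpose_sub, Matrix.transpose_one, hPsym]
  have hQh : (1 - P)ᴴ = 1 - P := by
    have h1 : (1 - P)ᴴ = (1 - P)ᵀ := by
      ext i k; simp [Matrix.conjTranspose_apply, Matrix.transpose_apply]
    rw [h1, hQsym]
  have hKcps : Kc.PosSemidef := by
    have h1 := hK.mul_mul_conjTranspose_same (1 - P)
    rw [hQh] at h1
    rwa [hKc]
  -- quadratic forms agree on ker P
  have hquad_eq : ∀ v : Fin n → ℝ, P *ᵥ v = 0 → v ⬝ᵥ Kc *ᵥ v = v ⬝ᵥ K *ᵥ v := by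
    intro v hPv
    have h1 : (1 - P) *ᵥ v = v := by
      rw [Matrix.sub_mulVec, Matrix.one_mulVec, hPv, sub_zero]
    rw [hKc, ← Matrix.mulVec_mulVec, ← Matrix.mulVec_mulVec, h1,
      Matrix.dotProduct_mulVec, ← Matrix.mulVec_transpose, hQsym, h1]
  -- the kernel of P
  have hWrank : n - 1 ≤ Module.finrank ℝ (LinearMap.ker P.mulVecLin) := by
    have hrange : LinearMap.range P.mulVecLin ≤ Submodule.span ℝ {(fun _ => (1:ℝ) : Fin n → ℝ)} := by
      rintro x ⟨v, rfl⟩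
      have h1 : P.mulVecLin v = ((n : ℝ)⁻¹ * ∑ k, v k) • (fun _ => (1:ℝ)) := by
        funext i
        simp [Matrix.mulVecLin_apply, hP, Matrix.mulVec, dotProduct,
          Matrix.vecMulVec_apply, Finset.mul_sum]
      rw [h1]
      exact Submodule.smul_mem _ _ (Submodule.mem_span_singleton_self _)
    have hone : (fun _ => (1:ℝ) : Fin n → ℝ) ≠ 0 := by
      intro h
      have := congrFun h ⟨0, hn⟩
      simp at this
    have h2 : Module.finrank ℝ (LinearMap.range P.mulVecLin) ≤ 1 := by
      have h3 := Submodule.finrank_mono hrange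
      rwa [finrank_span_singleton hone] at h3
    have h4 := LinearMap.finrank_range_add_finrank_ker P.mulVecLin
    rw [Module.finrank_fin_fun] at h4
    omega
  -- eigenvectors of Kc for positive eigenvalues lie in ker P
  have hbker : ∀ i : Fin n, lamc i ≠ 0 → P *ᵥ InterlaceAux.col Ac i = 0 := by
    intro i hi
    have h1 : P *ᵥ (Kc *ᵥ InterlaceAux.col Ac i) = 0 := by
      rw [Matrix.mulVec_mulVec, hPKc, Matrix.zero_mulVec]
    rw [eig_col hAc hKcd i, Matrix.mulVec_smul] at h1
    rcases smul_eq_zero.mp h1 with h | h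
    · exact absurd h hi
    · exact h
  -- key inequality 2 : lamc j ≤ lam j
  have key2 : ∀ j : Fin n, lamc j ≤ lam j := by
    intro j
    rcases eq_or_lt_of_le (lam_nonneg hAc hKcd hKcps j) with h0 | hpos
    · rw [← h0]; exact lam_nonneg hA hKd hK j
    · set S := Submodule.span ℝ (InterlaceAux.col Ac '' ↑(Finset.Iic j)) with hS
      set T := Submodule.span ℝ (InterlaceAux.col A '' ↑(Finset.Ici j)) with hT
      have hdS : Module.finrank ℝ S = (j : ℕ) + 1 := by
        rw [hS, finrank_span_cols hAc, Fin.card_Iic]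
      have hdT : Module.finrank ℝ T = n - (j : ℕ) := by
        rw [hT, finrank_span_cols hA, Fin.card_Ici]
      have hinf := finrank_inf S T
      have hj := j.isLt
      have hpos2 : 0 < Module.finrank ℝ ↥(S ⊓ T) := by omega
      obtain ⟨v, hv, hv0⟩ := exists_nonzero_of_finrank_pos hpos2
      have hvS : v ∈ S := hv.1
      have hvT : v ∈ T := hv.2
      have hSker : S ≤ LinearMap.ker P.mulVecLin := by
        rw [hS, Submodule.span_le]
        rintro x ⟨i, hi, rfl⟩
        have hi' : i ≤ j := by simpa using hi
        have hne : lamc i ≠ 0 := (lt_of_lt_of_le hpos (hlamc hi')).ne'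
        simpa [LinearMap.mem_ker, Matrix.mulVecLin_apply] using hbker i hne
      have hPv : P *ᵥ v = 0 := by
        have := hSker hvS
        simpa [LinearMap.mem_ker, Matrix.mulVecLin_apply] using this
      have hlow := quad_ge_of_mem_head hAc hlamc j hvS
      have hup := quad_le_of_mem_tail hA hlam j hvT
      rw [← hKcd] at hlow
      rw [← hKd] at hup
      have heq := hquad_eq v hPv
      have hvv := dot_self_pos hv0
      have : lamc j * (v ⬝ᵥ v) ≤ lam j * (v ⬝ᵥ v) := by linarith
      exact le_of_mul_le_mul_right (by linarith [this]) hvv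
  -- key inequality 1 : lam (j+1) ≤ lamc j
  have key1 : ∀ (j : Fin n) (h : (j : ℕ) + 1 < n), lam ⟨(j : ℕ) + 1, h⟩ ≤ lamc j := by
    intro j h
    set j1 : Fin n := ⟨(j : ℕ) + 1, h⟩ with hj1
    set S := Submodule.span ℝ (InterlaceAux.col A '' ↑(Finset.Iic j1)) with hS
    set W := LinearMap.ker P.mulVecLin with hW
    set T := Submodule.span ℝ (InterlaceAux.col Ac '' ↑(Finset.Ici j)) with hT
    have hdS : Module.finrank ℝ S = (j : ℕ) + 2 := by
      rw [hS, finrank_span_cols hA, Fin.card_Iic]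
    have hdT : Module.finrank ℝ T = n - (j : ℕ) := by
      rw [hT, finrank_span_cols hAc, Fin.card_Ici]
    have hinf1 := finrank_inf S W
    have hinf2 := finrank_inf (S ⊓ W) T
    have hj := j.isLt
    have hpos2 : 0 < Module.finrank ℝ ↥(S ⊓ W ⊓ T) := by omega
    obtain ⟨v, hv, hv0⟩ := exists_nonzero_of_finrank_pos hpos2
    have hvS : v ∈ S := hv.1.1
    have hvW : v ∈ W := hv.1.2
    have hvT : v ∈ T := hv.2
    have hPv : P *ᵥ v = 0 := by
      simpa [hW, LinearMap.mem_ker, Matrix.mulVecLin_apply] using hvW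
    have hlow := quad_ge_of_mem_head hA hlam j1 hvS
    have hup := quad_le_of_mem_tail hAc hlamc j hvT
    rw [← hKd] at hlow
    rw [← hKcd] at hup
    have heq := hquad_eq v hPv
    have hvv := dot_self_pos hv0
    exact le_of_mul_le_mul_right (by linarith) hvv
  -- conclusion
  intro j
  have e : Kc.trace / K.trace * (lamc j / Kc.trace) = lamc j / K.trace := by
    field_simp
  constructor
  · intro h
    rw [e]
    gcongr
    exact key1 j h
  · rw [e]
    gcongr
    exact key2 j
end

section
/- For any n×n real symmetric matrix with diagonal entries d_1, …, d_n and eigenvalues λ_1 ≥ … ≥ λ_n, the sum of any t diagonal entries is at most λ_1 + … + λ_t, with equality of total sums when t = n (Schur–Horn majorization inequality). -/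
open Matrix BigOperators

private lemma key_majorize {n t : ℕ} (lam c : Fin n → ℝ) (hlam : Antitone lam)
    (hc0 : ∀ j, 0 ≤ c j) (hc1 : ∀ j, c j ≤ 1) (hsum : ∑ j, c j = t) (ht : t ≤ n) :
    ∑ j, lam j * c j ≤ ∑ j ∈ Finset.univ.filter (fun j : Fin n => (j : ℕ) < t), lam j := by
  rcases lt_or_eq_of_le ht with ht' | rfl
  · set μ := lam ⟨t, ht'⟩ with hμ
    have hfilt : Finset.univ.filter (fun j : Fin n => (j : ℕ) < t) = Finset.Iio ⟨t, ht'⟩ := by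
      ext j; simp [Fin.lt_def]
    have hcard : (Finset.univ.filter (fun j : Fin n => (j : ℕ) < t)).card = t := by
      rw [hfilt, Fin.card_Iio]
    -- suffices with shifted lam
    have hstep : ∑ j, (lam j - μ) * c j ≤
        ∑ j ∈ Finset.univ.filter (fun j : Fin n => (j : ℕ) < t), (lam j - μ) := by
      rw [← Finset.sum_filter_add_sum_filter_not Finset.univ (fun j : Fin n => (j : ℕ) < t)
        (fun j => (lam j - μ) * c j)]
      have h1 : ∑ j ∈ Finset.univ.filter (fun j : Fin n => (j : ℕ) < t), (lam j - μ) * c j ≤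
          ∑ j ∈ Finset.univ.filter (fun j : Fin n => (j : ℕ) < t), (lam j - μ) := by
        apply Finset.sum_le_sum
        intro j hj
        have hjt : (j : ℕ) < t := (Finset.mem_filter.mp hj).2
        have hle : μ ≤ lam j := hlam (by simpa [Fin.le_def] using hjt.le)
        nlinarith [hc1 j, hc0 j]
      have h2 : ∑ j ∈ Finset.univ.filter (fun j : Fin n => ¬ (j : ℕ) < t), (lam j - μ) * c j ≤ 0 := by
        apply Finset.sum_nonpos
        intro j hj
        have hjt : ¬ (j : ℕ) < t := (Finset.mem_filter.mp hj).2
        have hle : lam j ≤ μ := hlam (by simpa [Fin.le_def] using Nat.le_of_not_lt hjt)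
        exact mul_nonpos_of_nonpos_of_nonneg (by linarith) (hc0 j)
      linarith
    have e1 : ∑ j, (lam j - μ) * c j = ∑ j, lam j * c j - μ * t := by
      simp [sub_mul, Finset.sum_sub_distrib, ← Finset.mul_sum, hsum]
    have e2 : ∑ j ∈ Finset.univ.filter (fun j : Fin n => (j : ℕ) < t), (lam j - μ)
        = (∑ j ∈ Finset.univ.filter (fun j : Fin n => (j : ℕ) < t), lam j) - μ * t := by
      rw [Finset.sum_sub_distrib, Finset.sum_const, hcard]
      ring_nf
    rw [e1, e2] at hstep
    linarith
  · have hfilt : Finset.univ.filter (fun j : Fin t => (j : ℕ) < t) = Finset.univ := by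
      ext j; simp [j.isLt]
    rw [hfilt]
    have hall : ∀ j ∈ Finset.univ, c j = (1 : ℝ) := by
      have h0 : ∑ j, (1 - c j) = 0 := by
        simp [Finset.sum_sub_distrib, hsum]
      intro j _
      have := (Finset.sum_eq_zero_iff_of_nonneg (fun j _ => by linarith [hc1 j])).mp h0 j
        (Finset.mem_univ j)
      linarith [this]
    refine le_of_eq ?_
    calc ∑ j, lam j * c j = ∑ j, lam j * 1 := Finset.sum_congr rfl (fun j hj => by rw [hall j hj])
      _ = ∑ j, lam j := by simp

theorem schur_horn_majorization {n : ℕ}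
    (M : Matrix (Fin n) (Fin n) ℝ) (hM : M.IsSymm)
    (A : Matrix (Fin n) (Fin n) ℝ) (lam : Fin n → ℝ)
    (hA : Aᵀ * A = 1)
    (hMd : M = A * diagonal lam * Aᵀ)
    (hlam : Antitone lam) :
    (∀ t : ℕ, ∀ S : Finset (Fin n), S.card = t →
      ∑ i ∈ S, M i i
        ≤ ∑ i ∈ Finset.univ.filter (fun i : Fin n => (i : ℕ) < t), lam i) ∧
    ∑ i, M i i = ∑ i, lam i := by
  have hA' : A * Aᵀ = 1 := mul_eq_one_comm.mp hA
  have hdiag : ∀ i, M i i = ∑ j, lam j * (A i j)^2 := by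
    intro i
    rw [hMd]
    simp [Matrix.mul_apply, Matrix.diagonal, Finset.sum_mul]
    apply Finset.sum_congr rfl
    intro j _
    ring
  have hcol1 : ∀ j : Fin n, ∑ i, (A i j)^2 = 1 := by
    intro j
    have := congrFun (congrFun hA j) j
    simpa [Matrix.mul_apply, Matrix.one_apply, sq] using this
  have hrow1 : ∀ i : Fin n, ∑ j, (A i j)^2 = 1 := by
    intro i
    have := congrFun (congrFun hA' i) i
    simpa [Matrix.mul_apply, Matrix.one_apply, sq] using this
  constructor
  · intro t S hS
    set c : Fin n → ℝ := fun j => ∑ i ∈ S, (A i j)^2 with hc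
    have hc0 : ∀ j, 0 ≤ c j := fun j => Finset.sum_nonneg fun i _ => sq_nonneg _
    have hc1 : ∀ j, c j ≤ 1 := by
      intro j
      calc c j ≤ ∑ i, (A i j)^2 :=
            Finset.sum_le_sum_of_subset_of_nonneg (Finset.subset_univ S)
              (fun i _ _ => sq_nonneg _)
        _ = 1 := hcol1 j
    have hsum : ∑ j, c j = t := by
      rw [Finset.sum_comm]
      calc ∑ i ∈ S, ∑ j, (A i j)^2 = ∑ i ∈ S, (1:ℝ) :=
            Finset.sum_congr rfl (fun i _ => hrow1 i)
        _ = t := by simp [hS]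
    have ht : t ≤ n := by
      rw [← hS]
      simpa using Finset.card_le_card (Finset.subset_univ S)
    have hrewrite : ∑ i ∈ S, M i i = ∑ j, lam j * c j := by
      simp only [hdiag, hc]
      rw [Finset.sum_comm]
      simp [Finset.mul_sum]
    rw [hrewrite]
    exact key_majorize lam c hlam hc0 hc1 hsum ht
  · have : Matrix.trace M = Matrix.trace (diagonal lam) := by
      rw [hMd, Matrix.trace_mul_cycle, hA, Matrix.one_mul]
    simpa [Matrix.trace, Matrix.diag] using this
end

section
/- The largest eigenvalue of K_c satisfies λ_1(K_c) ≥ max_i [λ_i + (‖μ‖² − (2/n)λ_i)(α_iᵀ1)²], where (λ_i, α_i) range over an orthonormal eigenbasis of K and ‖μ‖² = (1/n²)·1ᵀK1. -/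
open Matrix BigOperators

lemma dotProduct_mulVec_symm {n : ℕ} (M : Matrix (Fin n) (Fin n) ℝ)
    (hM : Mᵀ = M) (v w : Fin n → ℝ) :
    dotProduct (M *ᵥ v) w = dotProduct v (M *ᵥ w) := by
  rw [Matrix.dotProduct_mulVec, ← hM, Matrix.vecMul_transpose, hM]

lemma rayleigh_le_sup' {n : ℕ} (hn : 0 < n) (A : Matrix (Fin n) (Fin n) ℝ)
    (hA : A.IsHermitian) (x : Fin n → ℝ) (hx : dotProduct x x = 1) :
    dotProduct x (A *ᵥ x) ≤
      Finset.univ.sup' ⟨⟨0, hn⟩, Finset.mem_univ _⟩ hA.eigenvalues := by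
  set U := (hA.eigenvectorUnitary : Matrix (Fin n) (Fin n) ℝ) with hU
  have hUU : U * star U = 1 := (Matrix.mem_unitaryGroup_iff).mp hA.eigenvectorUnitary.2
  have hstar : star U = Uᵀ := by
    ext i j; simp [Matrix.star_apply]
  set y := Uᵀ *ᵥ x with hy
  have hUy : U *ᵥ y = x := by
    rw [hy, Matrix.mulVec_mulVec, ← hstar, hUU, Matrix.one_mulVec]
  have hy1 : dotProduct y y = 1 := by
    calc dotProduct y y = dotProduct y (Uᵀ *ᵥ x) := rfl
    _ = dotProduct (U *ᵥ y) x := by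
        rw [Matrix.dotProduct_mulVec, Matrix.vecMul_transpose]
    _ = 1 := by rw [hUy, hx]
  have hxy : x ᵥ* U = y := by rw [hy, ← Matrix.vecMul_transpose, Matrix.transpose_transpose]
  have hxAx : dotProduct x (A *ᵥ x) = ∑ j, hA.eigenvalues j * (y j) ^ 2 := by
    conv_lhs => rw [hA.spectral_theorem, Unitary.conjStarAlgAut_apply]
    rw [← hU, hstar, Matrix.mul_assoc, ← Matrix.mulVec_mulVec, Matrix.dotProduct_mulVec, hxy,
      ← Matrix.mulVec_mulVec]
    have hd : (Matrix.diagonal (RCLike.ofReal ∘ hA.eigenvalues) : Matrix (Fin n) (Fin n) ℝ) *ᵥ y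
        = fun j => hA.eigenvalues j * y j := by
      funext j
      simp [Matrix.mulVec_diagonal]
    rw [hd]
    simp only [dotProduct, pow_two]
    exact Finset.sum_congr rfl fun j _ => by ring
  rw [hxAx]
  set M := Finset.univ.sup' ⟨⟨0, hn⟩, Finset.mem_univ _⟩ hA.eigenvalues with hM
  calc ∑ j, hA.eigenvalues j * (y j) ^ 2 ≤ ∑ j, M * (y j) ^ 2 := by
        apply Finset.sum_le_sum
        intro j _
        exact mul_le_mul_of_nonneg_right (Finset.le_sup' _ (Finset.mem_univ j)) (sq_nonneg _)
  _ = M := by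
      rw [← Finset.mul_sum]
      have : ∑ j, (y j) ^ 2 = 1 := by
        simpa [dotProduct, pow_two] using hy1
      rw [this, mul_one]

theorem lower_bound_largest_eigenvalue_Kc {n : ℕ} (hn : 0 < n)
    (K P Kc : Matrix (Fin n) (Fin n) ℝ)
    (hK : K.PosSemidef)
    (hP : P = (n : ℝ)⁻¹ • vecMulVec (fun _ => 1) (fun _ => 1))
    (hKc : Kc = (1 - P) * K * (1 - P))
    (hKcH : Kc.IsHermitian)
    (lam : Fin n → ℝ) (α : Fin n → Fin n → ℝ)
    (heig : ∀ i, K.mulVec (α i) = lam i • α i)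
    (horth : ∀ i j, dotProduct (α i) (α j) = if i = j then 1 else 0) :
    ∀ i, lam i + ((n : ℝ)⁻¹ ^ 2 * dotProduct (fun _ => 1) (K.mulVec (fun _ => 1))
            - 2 / n * lam i) * (dotProduct (α i) (fun _ => 1)) ^ 2
      ≤ Finset.univ.sup' ⟨⟨0, hn⟩, Finset.mem_univ _⟩ hKcH.eigenvalues := by
  intro i
  set a := α i with ha
  set o : Fin n → ℝ := fun _ => 1 with ho
  set s := dotProduct a o with hs
  have ha1 : dotProduct a a = 1 := by simpa using horth i i
  have hKT : Kᵀ = K := by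
    have := hK.1
    rw [Matrix.IsHermitian] at this
    simpa [Matrix.conjTranspose_eq_transpose_of_trivial] using this
  have hPT : Pᵀ = P := by
    rw [hP]
    ext i j
    simp [Matrix.vecMulVec_apply, ho]
  have hQT : (1 - P)ᵀ = 1 - P := by
    rw [Matrix.transpose_sub, Matrix.transpose_one, hPT]
  -- the centered vector
  have hPa : P *ᵥ a = ((n : ℝ)⁻¹ * s) • o := by
    funext j
    simp only [hP, Matrix.smul_mulVec, Pi.smul_apply, smul_eq_mul]
    rw [hs, dotProduct_comm]
    simp [Matrix.mulVec, Matrix.vecMulVec_apply, dotProduct, ho]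
  have hv : (1 - P) *ᵥ a = a - ((n : ℝ)⁻¹ * s) • o := by
    rw [Matrix.sub_mulVec, Matrix.one_mulVec, hPa]
  set c := (n : ℝ)⁻¹ * s with hc
  set v := a - c • o with hvv
  -- quadratic form identity
  have key : dotProduct a (Kc *ᵥ a) = dotProduct v (K *ᵥ v) := by
    rw [hKc, ← Matrix.mulVec_mulVec, ← Matrix.mulVec_mulVec,
      ← dotProduct_mulVec_symm (1 - P) hQT a, hv]
  have hKao : dotProduct a (K *ᵥ o) = lam i * s := by
    rw [← dotProduct_mulVec_symm K hKT, heig, smul_dotProduct, ← hs]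
    simp
  have hKoa : dotProduct o (K *ᵥ a) = lam i * s := by
    rw [heig]
    simp only [dotProduct_smul, smul_eq_mul]
    rw [dotProduct_comm, ← hs]
  have hKaa : dotProduct a (K *ᵥ a) = lam i := by
    rw [heig]
    simp only [dotProduct_smul, smul_eq_mul]
    rw [ha1, mul_one]
  have expand : dotProduct v (K *ᵥ v)
      = lam i - 2 * c * (lam i * s) + c ^ 2 * dotProduct o (K *ᵥ o) := by
    rw [hvv, Matrix.mulVec_sub, Matrix.mulVec_smul, sub_dotProduct,
      dotProduct_sub, dotProduct_sub, smul_dotProduct,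
      smul_dotProduct]
    simp only [dotProduct_smul, smul_dotProduct, smul_eq_mul, hKaa, hKao, hKoa]
    ring
  have lhs_eq : lam i + ((n : ℝ)⁻¹ ^ 2 * dotProduct o (K *ᵥ o) - 2 / n * lam i) * s ^ 2
      = dotProduct a (Kc *ᵥ a) := by
    rw [key, expand, hc, div_eq_mul_inv]
    ring
  calc lam i + ((n : ℝ)⁻¹ ^ 2 * dotProduct (fun _ => 1) (K.mulVec (fun _ => 1))
          - 2 / n * lam i) * (dotProduct (α i) (fun _ => 1)) ^ 2
      = dotProduct a (Kc *ᵥ a) := lhs_eq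
  _ ≤ _ := rayleigh_le_sup' hn Kc hKcH a ha1
end

section
/- Let w_1 and w_c,1 be unit top eigenvectors of C = (1/n)XXᵀ and C_c = C − μμᵀ respectively, with w_1ᵀμ ≠ 0, w_1ᵀw_c,1 ≠ 0 and μ ≠ 0. Then (w_c,1ᵀμ)²/‖μ‖² ≤ (w_1ᵀw_c,1)². Equivalently, cos²(w_c,1, μ) ≤ cos²(w_c,1, w_1). -/
open Matrix BigOperators

lemma rayleigh_aux {d : ℕ} {A : Matrix (Fin d) (Fin d) ℝ} (hA : A.IsHermitian)
    {lmax : ℝ} (hmax : ∀ i, hA.eigenvalues i ≤ lmax) (x : Fin d → ℝ) :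
    dotProduct x (A.mulVec x) ≤ lmax * dotProduct x x := by
  set U : Matrix (Fin d) (Fin d) ℝ := (hA.eigenvectorUnitary : Matrix (Fin d) (Fin d) ℝ) with hUdef
  have hUmem := (hA.eigenvectorUnitary).2
  have hU1 : U * star U = 1 := (Matrix.mem_unitaryGroup_iff).mp hUmem
  set y : Fin d → ℝ := (star U) *ᵥ x with hydef
  have hxU : x ᵥ* U = y := by
    rw [hydef, Matrix.star_eq_conjTranspose, conjTranspose_eq_transpose_of_trivial,
      mulVec_transpose]
  have key : dotProduct x (A.mulVec x) = ∑ i, hA.eigenvalues i * (y i)^2 := by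
    conv_lhs => rw [hA.spectral_theorem, Unitary.conjStarAlgAut_apply]
    rw [← mulVec_mulVec, ← mulVec_mulVec, dotProduct_mulVec, hxU, dotProduct]
    congr 1
    funext i
    rw [mulVec_diagonal]
    simp [Function.comp]
    ring
  have hnorm : ∑ i, (y i)^2 = dotProduct x x := by
    have : dotProduct y y = dotProduct x x :=
      calc dotProduct y y = (x ᵥ* U) ⬝ᵥ (star U *ᵥ x) := by rw [hxU]
        _ = ((x ᵥ* U) ᵥ* star U) ⬝ᵥ x := dotProduct_mulVec _ _ _
        _ = (x ᵥ* (U * star U)) ⬝ᵥ x := by rw [vecMul_vecMul]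
        _ = dotProduct x x := by rw [hU1, vecMul_one]
    rw [← this, dotProduct]
    congr 1; funext i; ring
  rw [key, ← hnorm, Finset.mul_sum]
  apply Finset.sum_le_sum
  intro i _
  exact mul_le_mul_of_nonneg_right (hmax i) (sq_nonneg _)

theorem top_eigenvectors_angle_bound {d n : ℕ} (hn : 0 < n) (hd : 0 < d)
    (X : Matrix (Fin d) (Fin n) ℝ)
    (μ : Fin d → ℝ) (hμ : μ = (n : ℝ)⁻¹ • X.mulVec (fun _ => 1))
    (C Cc : Matrix (Fin d) (Fin d) ℝ)
    (hC : C = (n : ℝ)⁻¹ • (X * Xᵀ))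
    (hCc : Cc = C - vecMulVec μ μ)
    (hCH : ((n : ℝ) • C).IsHermitian)
    (hCcH : ((n : ℝ) • Cc).IsHermitian)
    (l1 lc1 : ℝ)
    (hl1 : l1 = Finset.univ.sup' ⟨⟨0, hd⟩, Finset.mem_univ _⟩ hCH.eigenvalues)
    (hlc1 : lc1 = Finset.univ.sup' ⟨⟨0, hd⟩, Finset.mem_univ _⟩ hCcH.eigenvalues)
    (w1 wc1 : Fin d → ℝ)
    (hw1 : C.mulVec w1 = (l1 / n) • w1)
    (hwc1 : Cc.mulVec wc1 = (lc1 / n) • wc1)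
    (hw1norm : dotProduct w1 w1 = 1)
    (hwc1norm : dotProduct wc1 wc1 = 1)
    (hne1 : dotProduct w1 μ ≠ 0)
    (hne2 : dotProduct w1 wc1 ≠ 0)
    (hμne : μ ≠ 0) :
    (dotProduct wc1 μ) ^ 2 / dotProduct μ μ ≤ (dotProduct w1 wc1) ^ 2 := by
  have hnR : (0:ℝ) < (n:ℝ) := by exact_mod_cast hn
  set a : ℝ := dotProduct w1 μ with ha
  set b : ℝ := dotProduct wc1 μ with hb
  set t : ℝ := dotProduct w1 wc1 with ht
  set m : ℝ := dotProduct μ μ with hm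
  -- positivity of m
  have hmpos : 0 < m := by
    have hmn : 0 ≤ m := by
      rw [hm, dotProduct]; exact Finset.sum_nonneg fun i _ => mul_self_nonneg (μ i)
    rcases lt_or_eq_of_le hmn with h | h
    · exact h
    · exact absurd (dotProduct_self_eq_zero.mp h.symm) hμne
  -- vecMulVec action
  have hvmv : ∀ v : Fin d → ℝ, (vecMulVec μ μ).mulVec v = (dotProduct μ v) • μ := by
    intro v; funext i
    simp only [mulVec, vecMulVec_apply, dotProduct, Pi.smul_apply, smul_eq_mul,
      Finset.mul_sum]
    rw [Finset.sum_mul]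
    exact Finset.sum_congr rfl fun j _ => by ring
  have hCwc1 : C.mulVec wc1 = (lc1 / n) • wc1 + b • μ := by
    have : C = Cc + vecMulVec μ μ := by rw [hCc, sub_add_cancel]
    rw [this, add_mulVec, hwc1, hvmv, dotProduct_comm, ← hb]
  have hCcw1 : Cc.mulVec w1 = (l1 / n) • w1 - a • μ := by
    rw [hCc, sub_mulVec, hw1, hvmv, dotProduct_comm, ← ha]
  -- symmetry of C
  have hCsymm : Cᵀ = C := by
    have h := hCH
    rw [Matrix.IsHermitian, conjTranspose_eq_transpose_of_trivial, transpose_smul] at h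
    have := smul_right_injective (Matrix (Fin d) (Fin d) ℝ) (ne_of_gt hnR) h
    exact this
  -- F1 : n * (a * b) = (l1 - lc1) * t
  have hF1 : (n:ℝ) * (a * b) = (l1 - lc1) * t := by
    have e1 : dotProduct w1 (Cc.mulVec wc1) = (lc1 / n) * t := by
      rw [hwc1, dotProduct_smul, smul_eq_mul, ht]
    have e2 : dotProduct w1 (C.mulVec wc1) = (l1 / n) * t := by
      rw [dotProduct_mulVec, ← mulVec_transpose, hCsymm, hw1, dotProduct_comm,
        dotProduct_smul, smul_eq_mul, dotProduct_comm, ht]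
    have e3 : dotProduct w1 (Cc.mulVec wc1)
        = dotProduct w1 (C.mulVec wc1) - a * b := by
      rw [hCc, sub_mulVec, dotProduct_sub, hvmv, dotProduct_smul, smul_eq_mul,
        dotProduct_comm μ wc1, ← hb, ← ha]
      ring
    rw [e1, e2] at e3
    field_simp at e3 ⊢
    nlinarith [e3]
  -- Rayleigh bounds
  have hmax1 : ∀ i, hCH.eigenvalues i ≤ l1 := by
    intro i; rw [hl1]; exact Finset.le_sup' _ (Finset.mem_univ i)
  have hmax2 : ∀ i, hCcH.eigenvalues i ≤ lc1 := by
    intro i; rw [hlc1]; exact Finset.le_sup' _ (Finset.mem_univ i)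
  have hF2 : (n:ℝ) * b^2 ≤ l1 - lc1 := by
    have h := rayleigh_aux hCH hmax1 wc1
    rw [hwc1norm, mul_one, smul_mulVec, dotProduct_smul, smul_eq_mul, hCwc1,
      dotProduct_add, dotProduct_smul, dotProduct_smul, hwc1norm] at h
    simp only [smul_eq_mul] at h
    rw [← hb] at h
    have heq : (n:ℝ) * (lc1 / n * 1 + b * b) = lc1 + n * b^2 := by
      rw [mul_one, mul_add, mul_div_cancel₀ _ (ne_of_gt hnR)]; ring
    linarith [h, heq]
  have hF3 : l1 - lc1 ≤ (n:ℝ) * a^2 := by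
    have h := rayleigh_aux hCcH hmax2 w1
    rw [hw1norm, mul_one, smul_mulVec, dotProduct_smul, smul_eq_mul, hCcw1,
      dotProduct_sub, dotProduct_smul, dotProduct_smul, hw1norm] at h
    simp only [smul_eq_mul] at h
    rw [← ha] at h
    have heq : (n:ℝ) * (l1 / n * 1 - a * a) = l1 - n * a^2 := by
      rw [mul_one, mul_sub, mul_div_cancel₀ _ (ne_of_gt hnR)]; ring
    linarith [h, heq]
  -- Cauchy-Schwarz : a^2 ≤ m
  have hF4 : a^2 ≤ m := by
    have h := Finset.sum_mul_sq_le_sq_mul_sq Finset.univ w1 μ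
    have h1 : (∑ i, w1 i * μ i) = a := rfl
    have h2 : (∑ i, w1 i ^ 2) = 1 := by
      rw [← hw1norm]; simp [dotProduct, pow_two]
    have h3 : (∑ i, μ i ^ 2) = m := by simp [hm, dotProduct, pow_two]
    rw [h1, h2, h3, one_mul] at h
    exact h
  -- conclude
  set Δ : ℝ := l1 - lc1 with hΔ
  rw [div_le_iff₀ hmpos]
  by_cases hb0 : b = 0
  · rw [hb0]; norm_num; positivity
  · have hΔpos : 0 < Δ := lt_of_lt_of_le (by positivity) hF2
    have e1 : Δ^2 * t^2 = (n:ℝ)^2 * a^2 * b^2 := by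
      calc Δ^2 * t^2 = (Δ * t)^2 := by ring
        _ = ((n:ℝ) * (a * b))^2 := by rw [hF1]
        _ = (n:ℝ)^2 * a^2 * b^2 := by ring
    have e2 : Δ^2 ≤ (n:ℝ)^2 * a^2 * a^2 := by nlinarith [hΔpos.le, hF3]
    have e3 : b^2 * Δ^2 ≤ t^2 * m * Δ^2 := by
      calc b^2 * Δ^2 ≤ b^2 * ((n:ℝ)^2 * a^2 * a^2) :=
            mul_le_mul_of_nonneg_left e2 (sq_nonneg b)
        _ ≤ b^2 * ((n:ℝ)^2 * a^2 * m) := by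
            have : (n:ℝ)^2 * a^2 * a^2 ≤ (n:ℝ)^2 * a^2 * m :=
              mul_le_mul_of_nonneg_left hF4 (by positivity)
            exact mul_le_mul_of_nonneg_left this (sq_nonneg b)
        _ = ((n:ℝ)^2 * a^2 * b^2) * m := by ring
        _ = (Δ^2 * t^2) * m := by rw [e1]
        _ = t^2 * m * Δ^2 := by ring
    exact le_of_mul_le_mul_right e3 (by positivity)
end
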